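/- arXiv:2501.19014 — 2 statements merged into one kernel-verified Lean document; each statement's English description precedes it below -/
import Mathlib

section
/- For γ > -1 and c ∈ ℝ, if r̃(r) = e^c r^{γ+1}/(γ+1) + O(r^{3γ+3}) as r → 0⁺, then the inverse relation r(r̃) satisfies r = (γ+1)^{1/(γ+1)} e^{-c/(γ+1)} r̃^{1/(γ+1)} + O(r̃^{2 + 1/(γ+1)}) as r̃ → 0⁺. In particular, r(r̃)/( (γ+1)^{1/(γ+1)} e^{-c/(γ+1)} r̃^{1/(γ+1)} ) → 1 as r̃ → 0⁺. -/
/-! With `a = γ + 1` and `B = e^c / a`, write `r̃(s) = B s^a u(s)`, so that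
`u(s) = 1 + O(s^{2a})`. Then `B^{-1/a} r̃(s)^{1/a} = s u(s)^{1/a} = s + O(s^{1+2a})`, and since
`s^a = O(r̃(s))` the error is `O(r̃(s)^{2+1/a})`. By the intermediate value theorem `r̃` maps every
`(0, δ)` onto a right neighbourhood of `0`, so `r(t) → 0⁺` and `r̃(r(t)) = t` eventually;
substituting `s = r(t)` gives the expansion, and the ratio tends to `1` because
`t^{2+1/a} = o(t^{1/a})`. -/

open Filter Topology Asymptotics Set

lemma tendsto_rpow_nhdsGT_zero {q : ℝ} (hq : 0 < q) :
    Tendsto (fun s : ℝ => s ^ q) (𝓝[>] 0) (𝓝 0) := by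
  simpa [Real.zero_rpow hq.ne'] using
    (Real.continuousAt_rpow_const 0 q (Or.inr hq.le)).tendsto.mono_left nhdsWithin_le_nhds

lemma isLittleO_rpow_rpow_nhdsGT_zero {p q : ℝ} (hpq : p < q) :
    (fun s : ℝ => s ^ q) =o[𝓝[>] 0] fun s => s ^ p := by
  have h := ((isLittleO_one_iff ℝ).2 (tendsto_rpow_nhdsGT_zero (sub_pos.2 hpq))).mul_isBigO
    (isBigO_refl (fun s : ℝ => s ^ p) _)
  refine h.congr' ?_ (by simp)
  filter_upwards [self_mem_nhdsWithin] with s hs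
  rw [← Real.rpow_add hs, sub_add_cancel]

lemma isBigO_rpow_sub_one {α : Type*} {l : Filter α} {u : α → ℝ} (hu : Tendsto u l (𝓝 1))
    (p : ℝ) : (fun x => u x ^ p - 1) =O[l] fun x => u x - 1 := by
  have h := ((Real.hasDerivAt_rpow_const (p := p) (Or.inl one_ne_zero)).isBigO_sub).comp_tendsto hu
  rw [Real.one_rpow] at h
  exact h

lemma isBigO_div_rpow_sub_one {f : ℝ → ℝ} {a b B : ℝ} (hB : B ≠ 0)
    (hf : (fun s => f s - B * s ^ a) =O[𝓝[>] 0] fun s => s ^ (a + b)) :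
    (fun s => f s / (B * s ^ a) - 1) =O[𝓝[>] 0] fun s => s ^ b := by
  refine ((hf.mul (isBigO_refl (fun s => (B * s ^ a)⁻¹) _)).congr' ?_ ?_).trans
    (isBigO_const_mul_self B⁻¹ _ _)
  all_goals filter_upwards [self_mem_nhdsWithin] with s hs
  all_goals have : s ^ a ≠ 0 := (Real.rpow_pos_of_pos hs a).ne'
  · field_simp
  · rw [Real.rpow_add hs]; field_simp

lemma eventually_mem_image_Ioo {f : ℝ → ℝ} {δ : ℝ} (hδ : 0 < δ)
    (hcont : ContinuousOn f (Ioo 0 δ)) (hf : Tendsto f (𝓝[>] 0) (𝓝[>] 0)) :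
    ∀ᶠ t in 𝓝[>] 0, t ∈ f '' Ioo 0 δ := by
  have hIoo : ∀ᶠ s in 𝓝[>] (0 : ℝ), s ∈ Ioo 0 δ := Ioo_mem_nhdsGT hδ
  obtain ⟨s₀, hs₀, hfs₀⟩ := (hIoo.and (hf.eventually self_mem_nhdsWithin)).exists
  filter_upwards [Ioo_mem_nhdsGT hfs₀] with t ht
  obtain ⟨s₁, hs₁, hfs₁⟩ := (hIoo.and
    ((hf.mono_right nhdsWithin_le_nhds).eventually (eventually_lt_nhds ht.1))).exists
  exact (isPreconnected_Ioo.image f hcont).Icc_subset ⟨s₁, hs₁, rfl⟩ ⟨s₀, hs₀, rfl⟩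
    ⟨hfs₁.le, ht.2.le⟩

lemma Set.LeftInvOn.tendsto_nhdsGT_zero {f g : ℝ → ℝ} {ε : ℝ} (hε : 0 < ε)
    (hg : LeftInvOn g f (Ioo 0 ε)) (hcont : ContinuousOn f (Ioo 0 ε))
    (hf : Tendsto f (𝓝[>] 0) (𝓝[>] 0)) :
    Tendsto g (𝓝[>] 0) (𝓝[>] 0) ∧ ∀ᶠ t in 𝓝[>] 0, f (g t) = t := by
  have hcover : ∀ δ, 0 < δ → δ ≤ ε → ∀ᶠ t in 𝓝[>] 0, g t ∈ Ioo 0 δ ∧ f (g t) = t := by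
    intro δ hδ hδε
    have hsub : Ioo 0 δ ⊆ Ioo 0 ε := Ioo_subset_Ioo_right hδε
    filter_upwards [eventually_mem_image_Ioo hδ (hcont.mono hsub) hf]
    rintro _ ⟨s, hs, rfl⟩
    rw [hg (hsub hs)]
    exact ⟨hs, rfl⟩
  refine ⟨(nhdsGT_basis 0).tendsto_right_iff.2 fun δ hδ => ?_,
    (hcover ε hε le_rfl).mono fun _ h => h.2⟩
  filter_upwards [hcover (min δ ε) (lt_min hδ hε) (min_le_right _ _)] with t ht
  exact ⟨ht.1.1, ht.1.2.trans_le (min_le_left _ _)⟩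

lemma Set.LeftInvOn.isBigO_sub {f g φ ψ : ℝ → ℝ} {ε : ℝ} (hε : 0 < ε)
    (hg : LeftInvOn g f (Ioo 0 ε)) (hcont : ContinuousOn f (Ioo 0 ε))
    (hf : Tendsto f (𝓝[>] 0) (𝓝[>] 0))
    (h : (fun s => s - φ (f s)) =O[𝓝[>] 0] fun s => ψ (f s)) :
    (fun t => g t - φ t) =O[𝓝[>] 0] ψ := by
  obtain ⟨hg₀, hfg⟩ := hg.tendsto_nhdsGT_zero hε hcont hf
  exact (h.comp_tendsto hg₀).congr' (hfg.mono fun t ht => by simp [ht])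
    (hfg.mono fun t ht => by simp [ht])

section RelativeError

variable {f : ℝ → ℝ} {a b B : ℝ}

lemma tendsto_div_of_div_sub_one_isBigO (hb : 0 < b)
    (hu : (fun s => f s / (B * s ^ a) - 1) =O[𝓝[>] 0] fun s => s ^ b) :
    Tendsto (fun s => f s / (B * s ^ a)) (𝓝[>] 0) (𝓝 1) := by
  simpa using (hu.trans_tendsto (tendsto_rpow_nhdsGT_zero hb)).add_const 1

lemma tendsto_nhdsGT_zero_of_div_tendsto_one (ha : 0 < a) (hB : 0 < B)
    (hu : Tendsto (fun s => f s / (B * s ^ a)) (𝓝[>] 0) (𝓝 1)) :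
    Tendsto f (𝓝[>] 0) (𝓝[>] 0) := by
  have hpos : ∀ᶠ s in 𝓝[>] (0 : ℝ), 0 < B * s ^ a := by
    filter_upwards [self_mem_nhdsWithin] with s hs
    exact mul_pos hB (Real.rpow_pos_of_pos hs a)
  have hf : f =ᶠ[𝓝[>] 0] fun s => B * s ^ a * (f s / (B * s ^ a)) := by
    filter_upwards [hpos] with s hs
    rw [mul_div_cancel₀ _ hs.ne']
  refine tendsto_nhdsWithin_iff.2 ⟨?_, ?_⟩
  · have h := ((tendsto_rpow_nhdsGT_zero ha).const_mul B).mul hu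
    rw [mul_zero, zero_mul] at h
    exact h.congr' hf.symm
  · filter_upwards [hf, hpos, hu.eventually (lt_mem_nhds one_pos)] with s hs hBs hus
    rw [hs]
    exact mul_pos hBs hus

lemma sub_rpow_isBigO_of_div_sub_one (ha : 0 < a) (hb : 0 < b) (hB : 0 < B)
    (hu : (fun s => f s / (B * s ^ a) - 1) =O[𝓝[>] 0] fun s => s ^ b) :
    (fun s => s - B ^ (-(1 / a)) * f s ^ (1 / a)) =O[𝓝[>] 0] fun s => f s ^ ((1 + b) / a) := by
  set u := fun s => f s / (B * s ^ a)
  have hu₁ := tendsto_div_of_div_sub_one_isBigO hb hu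
  have hf₀ := tendsto_nhdsGT_zero_of_div_tendsto_one ha hB hu₁
  have hsa : (fun s : ℝ => s ^ a) =O[𝓝[>] 0] f :=
    (isBigO_self_const_mul hB.ne' _ _).trans (isEquivalent_of_tendsto_one hu₁).isBigO_symm
  have hmain : (fun s => s * (u s ^ (1 / a) - 1)) =O[𝓝[>] 0] fun s => s * s ^ b :=
    (isBigO_refl _ _).mul ((isBigO_rpow_sub_one hu₁ _).trans hu)
  refine (hmain.neg_left.congr' ?_ ?_).trans (hsa.rpow (by positivity) ?_)
  · filter_upwards [self_mem_nhdsWithin, hf₀.eventually self_mem_nhdsWithin] with s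
      (hs : 0 < s) (hfs : 0 < f s)
    have hBsa : (B * s ^ a) ^ (1 / a) = B ^ (1 / a) * s := by
      rw [Real.mul_rpow hB.le (Real.rpow_nonneg hs.le a), one_div, Real.rpow_rpow_inv hs.le ha.ne']
    have hBp : 0 < B ^ (1 / a) := Real.rpow_pos_of_pos hB _
    simp only [u]
    rw [Real.div_rpow hfs.le (by positivity), hBsa, Real.rpow_neg hB.le]
    field_simp
    ring
  · filter_upwards [self_mem_nhdsWithin] with s hs
    rw [← Real.rpow_mul hs.le, mul_div_cancel₀ _ ha.ne', Real.rpow_add hs, Real.rpow_one]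
  · exact (hf₀.eventually self_mem_nhdsWithin).mono fun _ h => le_of_lt h

end RelativeError

lemma tendsto_div_of_sub_isBigO_rpow {g : ℝ → ℝ} {C p q : ℝ} (hC : C ≠ 0) (hpq : p < q)
    (h : (fun t => g t - C * t ^ p) =O[𝓝[>] 0] fun t => t ^ q) :
    Tendsto (fun t => g t / (C * t ^ p)) (𝓝[>] 0) (𝓝 1) := by
  have hequiv : g ~[𝓝[>] 0] fun t => C * t ^ p :=
    h.trans_isLittleO ((isLittleO_rpow_rpow_nhdsGT_zero hpq).trans_isBigO
      (isBigO_self_const_mul hC _ _))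
  refine (isEquivalent_iff_tendsto_one ?_).1 hequiv
  filter_upwards [self_mem_nhdsWithin] with t ht
  exact mul_ne_zero hC (Real.rpow_pos_of_pos ht p).ne'

theorem inverse_asymptotics_general (γ c ε : ℝ) (hγ : γ > -1) (hε : 0 < ε)
    (rt rinv : ℝ → ℝ)
    (hcont : ContinuousOn rt (Set.Ioo 0 ε))
    (hinv : ∀ s ∈ Set.Ioo 0 ε, rinv (rt s) = s)
    (hbig : (fun s => rt s - Real.exp c * s ^ (γ + 1) / (γ + 1))
      =O[𝓝[>] (0:ℝ)] fun s => s ^ (3 * γ + 3)) :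
    ((fun t => rinv t - (γ + 1) ^ (1 / (γ + 1)) * Real.exp (-c / (γ + 1)) * t ^ (1 / (γ + 1)))
        =O[𝓝[>] (0:ℝ)] fun t => t ^ (2 + 1 / (γ + 1))) ∧
      Tendsto
        (fun t => rinv t / ((γ + 1) ^ (1 / (γ + 1)) * Real.exp (-c / (γ + 1)) * t ^ (1 / (γ + 1))))
        (𝓝[>] (0:ℝ)) (𝓝 1) := by
  have ha : 0 < γ + 1 := by linarith
  set B := Real.exp c / (γ + 1)
  have hB : 0 < B := by positivity
  have hrel : (fun s => rt s / (B * s ^ (γ + 1)) - 1) =O[𝓝[>] 0]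
      fun s => s ^ (2 * (γ + 1)) := by
    refine isBigO_div_rpow_sub_one hB.ne' ?_
    simpa only [mul_div_right_comm, show γ + 1 + 2 * (γ + 1) = 3 * γ + 3 by ring] using hbig
  have hC : B ^ (-(1 / (γ + 1))) = (γ + 1) ^ (1 / (γ + 1)) * Real.exp (-c / (γ + 1)) := by
    rw [Real.rpow_neg hB.le, Real.div_rpow (Real.exp_pos c).le ha.le, ← Real.exp_mul,
      inv_div, div_eq_mul_inv, ← Real.exp_neg]
    ring_nf
  have hexp : (1 + 2 * (γ + 1)) / (γ + 1) = 2 + 1 / (γ + 1) := by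
    field_simp
    ring
  have hleft : LeftInvOn rinv rt (Ioo 0 ε) := hinv
  have hrt : Tendsto rt (𝓝[>] 0) (𝓝[>] 0) := tendsto_nhdsGT_zero_of_div_tendsto_one ha hB
    (tendsto_div_of_div_sub_one_isBigO (by positivity) hrel)
  have hside := sub_rpow_isBigO_of_div_sub_one ha (by positivity) hB hrel
  rw [hC, hexp] at hside
  have hmain :=
    hleft.isBigO_sub (φ := fun t => _ * t ^ _) (ψ := fun t => t ^ _) hε hcont hrt hside
  exact ⟨hmain, tendsto_div_of_sub_isBigO_rpow (by positivity) (by linarith) hmain⟩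

theorem inverse_asymptotics (γ c ε : ℝ) (hγ : γ > -1) (hε : 0 < ε)
    (rt rinv : ℝ → ℝ)
    (hmono : StrictMonoOn rt (Set.Ioo 0 ε))
    (hcont : ContinuousOn rt (Set.Ioo 0 ε))
    (hpos : ∀ s ∈ Set.Ioo 0 ε, 0 < rt s)
    (hinv : ∀ s ∈ Set.Ioo 0 ε, rinv (rt s) = s)
    (hbig : (fun s => rt s - Real.exp c * s ^ (γ + 1) / (γ + 1))
      =O[𝓝[>] (0:ℝ)] fun s => s ^ (3 * γ + 3)) :
    ((fun t => rinv t - (γ + 1) ^ (1 / (γ + 1)) * Real.exp (-c / (γ + 1)) * t ^ (1 / (γ + 1)))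
        =O[𝓝[>] (0:ℝ)] fun t => t ^ (2 + 1 / (γ + 1))) ∧
      Tendsto
        (fun t => rinv t / ((γ + 1) ^ (1 / (γ + 1)) * Real.exp (-c / (γ + 1)) * t ^ (1 / (γ + 1))))
        (𝓝[>] (0:ℝ)) (𝓝 1) :=
  inverse_asymptotics_general γ c ε hγ hε rt rinv hcont hinv hbig
end

section
/- Let h : ℂ → ℝ be smooth with compact support and σ(z) = γ log|z| with γ ∈ ℝ. Then lim_{δ→0⁺} ∫_{|z|≥δ} (∇h·∇σ + h Δσ) dA = -2πγ h(0), where Δσ = 0 on ℂ\{0}; equivalently lim_{δ→0⁺} ∫_{|z|≥δ} ∇h(z)·(γ z/|z|²) dA(z) = -2πγ h(0). -/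
open MeasureTheory Filter Topology

theorem green_stokes_linear_singularity (γ : ℝ) (h : ℂ → ℝ)
    (hsmooth : ContDiff ℝ (⊤ : ℕ∞) h) (hsupp : HasCompactSupport h) :
    Tendsto
      (fun δ => ∫ z in {z : ℂ | δ ≤ ‖z‖},
        fderiv ℝ h z ((γ / ‖z‖ ^ 2) • z) ∂volume)
      (𝓝[>] (0:ℝ)) (𝓝 (-(2 * Real.pi * γ * h 0))) := by
  -- basic objects
  set e : ℝ → ℂ := fun θ => Complex.exp (θ * Complex.I) with he
  have habs_e : ∀ θ, ‖e θ‖ = 1 := fun θ => Complex.norm_exp_ofReal_mul_I θ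
  have hcont_e : Continuous e := by
    exact Complex.continuous_exp.comp (Complex.continuous_ofReal.mul continuous_const)
  have hsymm : ∀ p : ℝ × ℝ, Complex.polarCoord.symm p = ↑p.1 * e p.2 := by
    intro p
    simp [Complex.polarCoord_symm_apply, he, Complex.exp_mul_I, Complex.ofReal_cos,
      Complex.ofReal_sin]
  have hdh : Continuous (fderiv ℝ h) := hsmooth.continuous_fderiv (by simp)
  have hdiff : ∀ z, HasFDerivAt h (fderiv ℝ h z) z :=
    fun z => (hsmooth.differentiable (by simp) z).hasFDerivAt
  -- support radius
  obtain ⟨R₀, hR₀⟩ := hsupp.isBounded.subset_closedBall (0 : ℂ)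
  set R : ℝ := max R₀ 0 with hRdef
  have hR : tsupport h ⊆ Metric.closedBall 0 R :=
    hR₀.trans (Metric.closedBall_subset_closedBall (le_max_left _ _))
  have hRnn : (0 : ℝ) ≤ R := le_max_right _ _
  have hdR : tsupport (fderiv ℝ h) ⊆ Metric.closedBall 0 R :=
    (tsupport_fderiv_subset (𝕜 := ℝ) (f := h)).trans hR
  -- bounds
  obtain ⟨C, hC⟩ := hdh.bounded_above_of_compact_support (hsupp.fderiv (𝕜 := ℝ))
  obtain ⟨Ch, hCh⟩ := hsmooth.continuous.bounded_above_of_compact_support hsupp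
  -- vanishing outside R
  have habs_mul : ∀ (r : ℝ) (θ : ℝ), ‖(↑r * e θ : ℂ)‖ = |r| := by
    intro r θ; rw [norm_mul, habs_e, Complex.norm_real, Real.norm_eq_abs, mul_one]
  have hzero_d : ∀ (r θ : ℝ), R < |r| → fderiv ℝ h (↑r * e θ) = 0 := by
    intro r θ hr
    apply image_eq_zero_of_notMem_tsupport
    intro hmem
    have := hdR hmem
    rw [Metric.mem_closedBall, dist_zero_right, habs_mul] at this
    linarith
  have hzero_h : ∀ (r θ : ℝ), R < |r| → h (↑r * e θ) = 0 := by
    intro r θ hr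
    apply image_eq_zero_of_notMem_tsupport
    intro hmem
    have := hR hmem
    rw [Metric.mem_closedBall, dist_zero_right, habs_mul] at this
    linarith
  -- the key identity for δ > 0
  have key : ∀ δ : ℝ, 0 < δ →
      (∫ z in {z : ℂ | δ ≤ ‖z‖},
        fderiv ℝ h z ((γ / ‖z‖ ^ 2) • z) ∂volume)
      = ∫ θ in Set.Ioo (-Real.pi) Real.pi, -(γ * h (↑δ * e θ)) := by
    intro δ hδ
    set g : ℂ → ℝ := fun z => fderiv ℝ h z ((γ / ‖z‖ ^ 2) • z) with hg
    set S : Set ℂ := {z : ℂ | δ ≤ ‖z‖} with hS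
    have hSmeas : MeasurableSet S :=
      (isClosed_le continuous_const continuous_norm).measurableSet
    set Dc : ℝ × ℝ → ℝ := fun p => γ * (fderiv ℝ h (↑p.1 * e p.2)) (e p.2) with hDc
    set D : ℝ × ℝ → ℝ := ({p : ℝ × ℝ | δ ≤ p.1}).indicator Dc with hD
    have hDcCont : Continuous Dc := by
      apply continuous_const.mul
      exact (hdh.comp ((Complex.continuous_ofReal.comp continuous_fst).mul
        (hcont_e.comp continuous_snd))).clm_apply (hcont_e.comp continuous_snd)
    have hDmeas : StronglyMeasurable D :=
      hDcCont.stronglyMeasurable.indicator (measurableSet_le measurable_const measurable_fst)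
    have hDbound : ∀ p : ℝ × ℝ, ‖D p‖ ≤ |γ| * (C * 1) := by
      intro p
      refine (norm_indicator_le_norm_self Dc p).trans ?_
      rw [hDc]
      calc ‖γ * (fderiv ℝ h (↑p.1 * e p.2)) (e p.2)‖
          = |γ| * ‖(fderiv ℝ h (↑p.1 * e p.2)) (e p.2)‖ := by
            rw [norm_mul, Real.norm_eq_abs]
        _ ≤ |γ| * (‖fderiv ℝ h (↑p.1 * e p.2)‖ * ‖e p.2‖) := by
            gcongr; exact ContinuousLinearMap.le_opNorm _ _
        _ ≤ |γ| * (C * 1) := by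
            have he1 : ‖e p.2‖ = 1 := by rw [habs_e]
            have h1 : ‖fderiv ℝ h (↑p.1 * e p.2)‖ * ‖e p.2‖ ≤ C * 1 :=
              mul_le_mul (hC _) he1.le (norm_nonneg _) ((norm_nonneg _).trans (hC 0))
            exact mul_le_mul_of_nonneg_left h1 (abs_nonneg γ)
    have hDzero : ∀ p : ℝ × ℝ, R < p.1 → D p = 0 := by
      intro p hp
      have : Dc p = 0 := by
        rw [hDc]
        simp only
        rw [hzero_d p.1 p.2 (by rw [abs_of_nonneg (hRnn.trans hp.le)]; exact hp)]
        simp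
      rw [hD]
      by_cases hmem : p ∈ {p : ℝ × ℝ | δ ≤ p.1}
      · rw [Set.indicator_of_mem hmem, this]
      · rw [Set.indicator_of_notMem hmem]
    -- integrability of D on the target
    have hIntD : IntegrableOn D (Set.Ioi (0:ℝ) ×ˢ Set.Ioo (-Real.pi) Real.pi) volume := by
      have hsplit : Set.Ioi (0:ℝ) = Set.Ioc 0 R ∪ Set.Ioi R := (Set.Ioc_union_Ioi_eq_Ioi hRnn).symm
      rw [hsplit, Set.union_prod]
      apply IntegrableOn.union
      · apply Measure.integrableOn_of_bounded
        · exact ((Bornology.IsBounded.prod (Metric.isBounded_Ioc 0 R) (Metric.isBounded_Ioo (-Real.pi) Real.pi)).measure_lt_top).ne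
        · exact hDmeas.aestronglyMeasurable
        · exact ae_of_all _ hDbound
      · exact (integrableOn_zero (μ := volume)).congr_fun
          (fun p hp => (hDzero p hp.1).symm)
          ((measurableSet_Ioi.prod measurableSet_Ioo))
    -- the inner integral via FTC
    have inner : ∀ θ : ℝ, (∫ r in Set.Ioi (0:ℝ), D (r, θ)) = -(γ * h (↑δ * e θ)) := by
      intro θ
      have hDθ : ∀ r : ℝ, D (r, θ)
          = (Set.Ici δ).indicator (fun r => γ * (fderiv ℝ h (↑r * e θ)) (e θ)) r := by
        intro r
        rw [hD]
        by_cases hr : δ ≤ r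
        · rw [Set.indicator_of_mem (by exact hr), Set.indicator_of_mem (by exact hr)]
        · rw [Set.indicator_of_notMem (by exact hr), Set.indicator_of_notMem (by exact hr)]
      have hline : ∀ r : ℝ, HasDerivAt (fun r : ℝ => (↑r * e θ : ℂ)) (e θ) r := by
        intro r
        simpa using (Complex.ofRealCLM.hasDerivAt (x := r)).mul_const (e θ)
      have hφ : ∀ r : ℝ, HasDerivAt (fun r : ℝ => h (↑r * e θ))
          ((fderiv ℝ h (↑r * e θ)) (e θ)) r := by
        intro r
        exact (hdiff (↑r * e θ)).comp_hasDerivAt r (hline r)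
      have hsupp' : HasCompactSupport (fun r : ℝ => (fderiv ℝ h (↑r * e θ)) (e θ)) := by
        apply HasCompactSupport.intro (isCompact_Icc (a := -R) (b := R))
        intro r hr
        have hr' : R < |r| := by
          by_contra h'
          push_neg at h'
          exact hr (Set.mem_Icc.mpr (abs_le.mp h'))
        rw [hzero_d r θ hr']
        simp
      have hint' : IntegrableOn (fun r : ℝ => (fderiv ℝ h (↑r * e θ)) (e θ))
          (Set.Ioi δ) volume := by
        apply Integrable.integrableOn
        exact (((hdh.comp ((Complex.continuous_ofReal).mul
          continuous_const)).clm_apply continuous_const).integrable_of_hasCompactSupport hsupp')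
      have htend : Tendsto (fun r : ℝ => h (↑r * e θ)) atTop (𝓝 0) := by
        apply Tendsto.congr' _ tendsto_const_nhds
        filter_upwards [eventually_gt_atTop R] with r hr
        exact (hzero_h r θ (by rw [abs_of_pos (lt_of_le_of_lt hRnn hr)]; exact hr)).symm
      have hFTC : (∫ r in Set.Ioi δ, (fderiv ℝ h (↑r * e θ)) (e θ))
          = 0 - h (↑δ * e θ) :=
        integral_Ioi_of_hasDerivAt_of_tendsto
          ((hφ δ).continuousAt.continuousWithinAt)
          (fun r _ => hφ r) hint' htend
      calc (∫ r in Set.Ioi (0:ℝ), D (r, θ))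
          = ∫ r in Set.Ioi (0:ℝ),
              (Set.Ici δ).indicator (fun r => γ * (fderiv ℝ h (↑r * e θ)) (e θ)) r := by
            exact integral_congr_ae (ae_of_all _ fun r => hDθ r)
        _ = ∫ r in Set.Ioi (0:ℝ) ∩ Set.Ici δ,
              γ * (fderiv ℝ h (↑r * e θ)) (e θ) := by
            rw [setIntegral_indicator measurableSet_Ici]
        _ = ∫ r in Set.Ici δ, γ * (fderiv ℝ h (↑r * e θ)) (e θ) := by
            rw [Set.inter_eq_self_of_subset_right (Set.Ici_subset_Ioi.mpr hδ)]
        _ = ∫ r in Set.Ioi δ, γ * (fderiv ℝ h (↑r * e θ)) (e θ) := by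
            rw [integral_Ici_eq_integral_Ioi]
        _ = γ * ∫ r in Set.Ioi δ, (fderiv ℝ h (↑r * e θ)) (e θ) := by
            rw [integral_const_mul]
        _ = -(γ * h (↑δ * e θ)) := by rw [hFTC]; ring
    -- put it together
    have htarget : polarCoord.target = Set.Ioi (0:ℝ) ×ˢ Set.Ioo (-Real.pi) Real.pi := rfl
    have hIntD' : Integrable D
        ((volume.restrict (Set.Ioi (0:ℝ))).prod
          (volume.restrict (Set.Ioo (-Real.pi) Real.pi))) := by
      rw [Measure.prod_restrict]
      rw [MeasureTheory.IntegrableOn, Measure.volume_eq_prod] at hIntD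
      exact hIntD
    calc (∫ z in S, g z ∂volume)
        = ∫ z, S.indicator g z := (integral_indicator hSmeas).symm
      _ = ∫ p in polarCoord.target, p.1 • S.indicator g (Complex.polarCoord.symm p) :=
          (Complex.integral_comp_polarCoord_symm (S.indicator g)).symm
      _ = ∫ p in Set.Ioi (0:ℝ) ×ˢ Set.Ioo (-Real.pi) Real.pi, D p := by
          rw [htarget]
          apply setIntegral_congr_fun (measurableSet_Ioi.prod measurableSet_Ioo)
          rintro ⟨r, θ⟩ ⟨hr, hθ⟩
          dsimp only
          have hrpos : (0:ℝ) < r := hr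
          have habs : ‖Complex.polarCoord.symm (r, θ)‖ = r := by
            rw [Complex.norm_polarCoord_symm, abs_of_pos hrpos]
          have hzeq : Complex.polarCoord.symm (r, θ) = ↑r * e θ := hsymm (r, θ)
          by_cases hmem : δ ≤ r
          · have hSm : Complex.polarCoord.symm (r, θ) ∈ S := by
              rw [hS, Set.mem_setOf_eq, habs]; exact hmem
            rw [Set.indicator_of_mem hSm, hD, Set.indicator_of_mem (by exact hmem), hDc, hg]
            simp only [smul_eq_mul, habs]
            rw [hzeq]
            have : (↑r * e θ : ℂ) = r • e θ := by rw [Complex.real_smul]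
            rw [show ((γ / r ^ 2) • (↑r * e θ) : ℂ) = (γ / r ^ 2) • (r • e θ) by rw [this],
              smul_smul, ContinuousLinearMap.map_smul, smul_eq_mul]
            field_simp
          · have hSm : Complex.polarCoord.symm (r, θ) ∉ S := by
              rw [hS, Set.mem_setOf_eq, habs]; exact hmem
            rw [Set.indicator_of_notMem hSm, hD, Set.indicator_of_notMem (by exact hmem)]
            simp
      _ = ∫ θ in Set.Ioo (-Real.pi) Real.pi, ∫ r in Set.Ioi (0:ℝ), D (r, θ) := by
          rw [Measure.volume_eq_prod, ← Measure.prod_restrict]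
          exact integral_prod_symm D hIntD'
      _ = ∫ θ in Set.Ioo (-Real.pi) Real.pi, -(γ * h (↑δ * e θ)) := by
          exact setIntegral_congr_fun measurableSet_Ioo (fun θ _ => inner θ)
  -- the limit
  have hval : (∫ θ in Set.Ioo (-Real.pi) Real.pi, -(γ * h (0:ℂ)))
      = -(2 * Real.pi * γ * h 0) := by
    rw [setIntegral_const, measureReal_def, Real.volume_Ioo, smul_eq_mul,
      ENNReal.toReal_ofReal (by linarith [Real.pi_pos] : (0:ℝ) ≤ Real.pi - -Real.pi)]
    ring
  have lim : Tendsto (fun δ : ℝ => ∫ θ in Set.Ioo (-Real.pi) Real.pi, -(γ * h (↑δ * e θ)))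
      (𝓝[>] (0:ℝ)) (𝓝 (∫ θ in Set.Ioo (-Real.pi) Real.pi, -(γ * h (0:ℂ)))) := by
    apply tendsto_integral_filter_of_dominated_convergence (fun _ => |γ| * Ch)
    · apply Eventually.of_forall
      intro δ
      exact ((continuous_const.mul (hsmooth.continuous.comp
        (continuous_const.mul hcont_e))).neg).aestronglyMeasurable
    · apply Eventually.of_forall
      intro δ
      apply ae_of_all
      intro θ
      rw [norm_neg, norm_mul, Real.norm_eq_abs]
      simpa using mul_le_mul_of_nonneg_left (hCh (↑δ * e θ)) (abs_nonneg γ)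
    · exact integrableOn_const measure_Ioo_lt_top.ne
    · apply ae_of_all
      intro θ
      have hc : Continuous (fun δ : ℝ => -(γ * h (↑δ * e θ))) :=
        (continuous_const.mul (hsmooth.continuous.comp
          ((Complex.continuous_ofReal).mul continuous_const))).neg
      have := (hc.tendsto 0).mono_left (nhdsWithin_le_nhds (s := Set.Ioi (0:ℝ)))
      simpa using this
  rw [hval] at lim
  apply Tendsto.congr' _ lim
  filter_upwards [self_mem_nhdsWithin] with δ hδ
  exact (key δ hδ).symm
end
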